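/- arXiv:2003.04999 — 3 statements merged into one kernel-verified Lean document; each statement's English description precedes it below -/
import Mathlib

section
/- Let H ≥ 0, λ > 0, 1 < p < ∞ and X₀, X₁ ∈ ℝ. Let X : [0,∞) → ℝ be a global weak solution of D_t²X + 2H·D_tX + λe^{(p−1)Ht}|X|^p = 0 with data (X₀, X₁), i.e., X and e^{(p−1)Ht}|X|^p are locally integrable on [0,∞) and for every twice continuously differentiable compactly supported function φ : [0,∞) → ℝ one has −X₁φ(0) + X₀(D_tφ)(0) − 2HX₀φ(0) + ∫₀^∞ ( X(t)·(D_t²φ)(t) − 2H·X(t)·(D_tφ)(t) + λe^{(p−1)Ht}|X(t)|^p·φ(t) ) dt = 0. If X₁ + 2HX₀ ≤ 0, then X = 0 almost everywhere on [0,∞). -/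
open MeasureTheory Set Filter Topology Real

/-!
Test-function method. Let `φ_R(t) = ψ(t / R) ^ m` (`testFunction m R`) with `ψ = cutoff` a
smooth cutoff equal to `1` on `[-1, 1]`. Testing the weak formulation with `φ_R` and using
`X₁ + 2HX₀ ≤ 0` gives `I_R := ∫ λ e^{(p-1)Ht} |X|^p φ_R ≤ ∫ |X| |φ_R'' - 2Hφ_R'|`. Since
`|φ_R'' - 2Hφ_R'| ≤ K R⁻¹ ψ(t / R) ^ (m - 2)` and `m ≥ 2q` for the conjugate exponent `q`,
Young's inequality with weight `λ e^{(p-1)Ht} φ_R` bounds the right side by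
`I_R / p + O(R · R^{-q})`, hence `I_R = O(R^{1-q}) → 0`. As `φ_R = 1` on `[0, R]`, the
nonnegative nonlinear term has zero integral on every `[0, S]`, so `X = 0` a.e.
-/

noncomputable def cutoff (x : ℝ) : ℝ := smoothTransition (2 - x ^ 2)

lemma contDiff_cutoff {n : ℕ∞} : ContDiff ℝ n cutoff :=
  smoothTransition.contDiff.comp (contDiff_const.sub (contDiff_id.pow 2))

lemma cutoff_nonneg (x : ℝ) : 0 ≤ cutoff x := smoothTransition.nonneg _

lemma cutoff_le_one (x : ℝ) : cutoff x ≤ 1 := smoothTransition.le_one _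

lemma cutoff_eq_one {x : ℝ} (hx : |x| ≤ 1) : cutoff x = 1 :=
  smoothTransition.one_of_one_le <| by nlinarith [sq_abs x, abs_nonneg x]

lemma cutoff_eq_zero {x : ℝ} (hx : 2 ≤ |x|) : cutoff x = 0 :=
  smoothTransition.zero_of_nonpos <| by nlinarith [sq_abs x]

lemma hasCompactSupport_cutoff : HasCompactSupport cutoff :=
  HasCompactSupport.intro (isCompact_Icc (a := -2) (b := 2)) fun _ hx =>
    cutoff_eq_zero (not_le.1 fun h => hx (abs_le.1 h)).le

lemma exists_abs_deriv_cutoff_le :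
    ∃ M, ∀ x, |deriv cutoff x| ≤ M ∧ |deriv (deriv cutoff) x| ≤ M := by
  have h2 := contDiff_cutoff (n := 2)
  obtain ⟨M₁, hM₁⟩ := (h2.continuous_deriv (by norm_num)).bounded_above_of_compact_support
    hasCompactSupport_cutoff.deriv
  obtain ⟨M₂, hM₂⟩ := ((h2.iterate_deriv' 1 1).continuous_deriv le_rfl
    ).bounded_above_of_compact_support hasCompactSupport_cutoff.deriv.deriv
  exact ⟨max M₁ M₂, fun x =>
    ⟨(hM₁ x).trans (le_max_left _ _), (hM₂ x).trans (le_max_right _ _)⟩⟩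

section PowerBounds

variable {f : ℝ → ℝ} {M : ℝ}

lemma deriv_deriv_fun_pow (hf : ContDiff ℝ 2 f) (m : ℕ) (x : ℝ) :
    deriv (deriv fun y => f y ^ m) x =
      m * ((m - 1 : ℕ) * f x ^ (m - 2) * deriv f x) * deriv f x +
        m * f x ^ (m - 1) * deriv (deriv f) x := by
  have hd : Differentiable ℝ f := hf.differentiable (by norm_num)
  have hd' : Differentiable ℝ (deriv f) := (hf.iterate_deriv' 1 1).differentiable (by norm_num)
  have hfun : (deriv fun y => f y ^ m) = fun y => m * f y ^ (m - 1) * deriv f y :=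
    funext fun y => deriv_fun_pow (hd y) m
  rw [hfun]
  exact ((((hd x).hasDerivAt.fun_pow (m - 1)).const_mul (m : ℝ)).mul
    (hd' x).hasDerivAt).deriv

lemma abs_deriv_fun_pow_le (hf : ContDiff ℝ 2 f) (hf0 : ∀ x, 0 ≤ f x) (hf1 : ∀ x, f x ≤ 1)
    (hM : ∀ x, |deriv f x| ≤ M) {m : ℕ} (hm : 2 ≤ m) (x : ℝ) :
    |deriv (fun y => f y ^ m) x| ≤ m * M * f x ^ (m - 2) := by
  obtain ⟨k, rfl⟩ := Nat.exists_eq_add_of_le' hm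
  rw [deriv_fun_pow ((hf.differentiable (by norm_num)) x), abs_mul, abs_mul, Nat.abs_cast,
    abs_of_nonneg (pow_nonneg (hf0 x) _), Nat.add_sub_cancel, Nat.add_sub_assoc (by norm_num),
    pow_succ]
  calc (↑(k + 2) : ℝ) * (f x ^ k * f x) * |deriv f x| ≤ ↑(k + 2) * (f x ^ k * 1) * M := by
        have := hf0 x
        have := hf1 x
        have := hM x
        bound
    _ = _ := by ring

lemma abs_deriv_deriv_fun_pow_le (hf : ContDiff ℝ 2 f) (hf0 : ∀ x, 0 ≤ f x) (hf1 : ∀ x, f x ≤ 1)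
    (hM : ∀ x, |deriv f x| ≤ M) (hM' : ∀ x, |deriv (deriv f) x| ≤ M) {m : ℕ} (hm : 2 ≤ m)
    (x : ℝ) :
    |deriv (deriv fun y => f y ^ m) x| ≤ m * (m * M ^ 2 + M) * f x ^ (m - 2) := by
  obtain ⟨k, rfl⟩ := Nat.exists_eq_add_of_le' hm
  have hk : (↑(k + 2 - 1) : ℝ) ≤ ↑(k + 2) := by exact_mod_cast Nat.sub_le _ _
  have hfk := pow_nonneg (hf0 x) k
  rw [deriv_deriv_fun_pow hf, Nat.add_sub_cancel, Nat.add_sub_assoc (by norm_num), pow_succ]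
  calc _ ≤ |↑(k + 2) * (↑(k + 2 - 1) * f x ^ k * deriv f x) * deriv f x| +
        |↑(k + 2) * (f x ^ k * f x) * deriv (deriv f) x| := abs_add_le _ _
    _ = ↑(k + 2) * ↑(k + 2 - 1) * f x ^ k * |deriv f x| ^ 2 +
        ↑(k + 2) * (f x ^ k * f x) * |deriv (deriv f) x| := by
        simp only [abs_mul, Nat.abs_cast, abs_of_nonneg hfk, abs_of_nonneg (hf0 x)]; ring
    _ ≤ ↑(k + 2) * ↑(k + 2) * f x ^ k * M ^ 2 + ↑(k + 2) * (f x ^ k * 1) * M := by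
        have := hf0 x
        have := hf1 x
        have := hM x
        have := hM' x
        bound
    _ = _ := by ring

end PowerBounds

noncomputable def testFunction (m : ℕ) (R t : ℝ) : ℝ := cutoff (R⁻¹ * t) ^ m

section TestFunction

variable {m : ℕ} {R : ℝ}

lemma contDiff_testFunction {n : ℕ∞} : ContDiff ℝ n (testFunction m R) :=
  (contDiff_cutoff.comp (contDiff_const.mul contDiff_id)).pow m

lemma hasCompactSupport_testFunction (hm : m ≠ 0) (hR : R ≠ 0) :
    HasCompactSupport (testFunction m R) :=
  (hasCompactSupport_cutoff.comp_smul (inv_ne_zero hR)).mono fun t ht h =>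
    ht (by simp only [testFunction, ← smul_eq_mul, h, zero_pow hm])

lemma continuous_testFunction : Continuous (testFunction m R) :=
  (contDiff_testFunction (n := 0)).continuous

lemma testFunction_nonneg (t : ℝ) : 0 ≤ testFunction m R t := pow_nonneg (cutoff_nonneg _) m

lemma testFunction_eq_one (hR : 0 < R) {t : ℝ} (ht : |t| ≤ R) : testFunction m R t = 1 := by
  rw [testFunction, cutoff_eq_one, one_pow]
  rwa [abs_mul, abs_inv, abs_of_pos hR, inv_mul_le_one₀ hR]

lemma deriv_testFunction_zero (hR : 0 < R) : deriv (testFunction m R) 0 = 0 := by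
  have : testFunction m R =ᶠ[𝓝 0] fun _ => 1 := by
    filter_upwards [Metric.closedBall_mem_nhds 0 hR] with t ht
    exact testFunction_eq_one hR (by simpa using ht)
  rw [this.deriv_eq, deriv_const]

lemma deriv_testFunction (t : ℝ) :
    deriv (testFunction m R) t = R⁻¹ * deriv (fun y => cutoff y ^ m) (R⁻¹ * t) :=
  deriv_comp_mul_left R⁻¹ (fun y => cutoff y ^ m) t

lemma deriv_deriv_testFunction (t : ℝ) :
    deriv (deriv (testFunction m R)) t =
      R⁻¹ * (R⁻¹ * deriv (deriv fun y => cutoff y ^ m) (R⁻¹ * t)) := by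
  rw [funext deriv_testFunction, deriv_const_mul_field']
  beta_reduce
  rw [deriv_comp_mul_left]
  rfl

lemma exists_abs_deriv_deriv_sub_testFunction_le (H : ℝ) (hH : 0 ≤ H) (hm : 2 ≤ m) :
    ∃ K, 0 ≤ K ∧ ∀ R, 1 ≤ R → ∀ t,
      |deriv (deriv (testFunction m R)) t - 2 * H * deriv (testFunction m R) t| ≤
        K / R * cutoff (R⁻¹ * t) ^ (m - 2) := by
  obtain ⟨M, hM⟩ := exists_abs_deriv_cutoff_le
  have hM0 : 0 ≤ M := (abs_nonneg _).trans (hM 0).1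
  refine ⟨m * (m * M ^ 2 + M) + 2 * H * (m * M), by positivity, fun R hR t => ?_⟩
  have hR' : R⁻¹ ≤ 1 := inv_le_one_of_one_le₀ hR
  have h1 := abs_deriv_fun_pow_le contDiff_cutoff cutoff_nonneg cutoff_le_one
    (fun x => (hM x).1) hm (R⁻¹ * t)
  have h2 := abs_deriv_deriv_fun_pow_le contDiff_cutoff cutoff_nonneg cutoff_le_one
    (fun x => (hM x).1) (fun x => (hM x).2) hm (R⁻¹ * t)
  have hRpos : 0 < R⁻¹ := by positivity
  rw [deriv_deriv_testFunction, deriv_testFunction]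
  set u₁ := deriv (fun y => cutoff y ^ m) (R⁻¹ * t)
  set u₂ := deriv (deriv fun y => cutoff y ^ m) (R⁻¹ * t)
  calc _ ≤ R⁻¹ * (R⁻¹ * |u₂|) + 2 * H * (R⁻¹ * |u₁|) := by
        refine (abs_sub _ _).trans_eq ?_
        simp only [abs_mul, abs_of_pos hRpos, abs_of_nonneg hH, abs_two]
    _ ≤ R⁻¹ * (1 * |u₂|) + 2 * H * (R⁻¹ * |u₁|) := by gcongr
    _ ≤ R⁻¹ * (1 * (m * (m * M ^ 2 + M) * cutoff (R⁻¹ * t) ^ (m - 2))) +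
        2 * H * (R⁻¹ * (m * M * cutoff (R⁻¹ * t) ^ (m - 2))) := by gcongr
    _ = _ := by ring

end TestFunction

lemma Real.HolderConjugate.two_lt_of_two_mul_le {p q : ℝ} (hpq : p.HolderConjugate q) {m : ℕ}
    (hm : 2 * q ≤ m) : 2 < m := by
  exact_mod_cast (by linarith [hpq.symm.lt] : (2 : ℝ) < m)

lemma young_inequality_weighted {p q a b w : ℝ} (hpq : p.HolderConjugate q) (ha : 0 ≤ a)
    (hb : 0 ≤ b) (hw : 0 < w) : a * b ≤ w * a ^ p / p + w ^ (-(q / p)) * b ^ q / q := by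
  have hpow : (w ^ (1 / p)) ^ p = w ∧ (w ^ (-(1 / p))) ^ q = w ^ (-(q / p)) := by
    refine ⟨?_, ?_⟩
    · rw [← rpow_mul hw.le, one_div_mul_cancel hpq.ne_zero, rpow_one]
    · rw [← rpow_mul hw.le]
      ring_nf
  calc a * b = (w ^ (1 / p) * a) * (w ^ (-(1 / p)) * b) := by
        rw [mul_mul_mul_comm, ← rpow_add hw, add_neg_cancel, rpow_zero, one_mul]
    _ ≤ (w ^ (1 / p) * a) ^ p / p + (w ^ (-(1 / p)) * b) ^ q / q :=
        young_inequality_of_nonneg (by positivity) (by positivity) hpq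
    _ = w * a ^ p / p + w ^ (-(q / p)) * b ^ q / q := by
        rw [mul_rpow (by positivity) ha, mul_rpow (by positivity) hb, hpow.1, hpow.2]

lemma young_inequality_cutoff {p q a b c lam s K : ℝ} {m : ℕ} (hpq : p.HolderConjugate q)
    (hm : 2 * q ≤ m) (ha : 0 ≤ a) (hb : 0 ≤ b) (hlam : 0 < lam) (hc : lam ≤ c) (hs0 : 0 ≤ s)
    (hs1 : s ≤ 1) (hK : 0 ≤ K) (hbK : b ≤ K * s ^ (m - 2)) :
    a * b ≤ c * s ^ m * a ^ p / p + lam ^ (-(q / p)) * K ^ q / q := by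
  have hm2 := hpq.two_lt_of_two_mul_le hm
  have hq := hpq.symm.pos
  have hrem : 0 ≤ lam ^ (-(q / p)) * K ^ q / q := by positivity
  rcases hs0.eq_or_lt with rfl | hs
  · have : b = 0 := le_antisymm (by simpa [zero_pow (by omega : m - 2 ≠ 0)] using hbK) hb
    simpa [this, zero_pow (by omega : m ≠ 0)] using hrem
  have hc0 : 0 < c := hlam.trans_le hc
  have hweight : (c * s ^ m) ^ (-(q / p)) * b ^ q ≤ lam ^ (-(q / p)) * K ^ q := by
    have hexp : (s ^ m) ^ (-(q / p)) * (s ^ (m - 2)) ^ q = s ^ ((m : ℝ) - 2 * q) := by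
      rw [← rpow_natCast, ← rpow_natCast, ← rpow_mul hs.le, ← rpow_mul hs.le, ← rpow_add hs,
        hpq.symm.div_conj_eq_sub_one, Nat.cast_sub hm2.le]
      congr 1
      push_cast
      ring
    calc (c * s ^ m) ^ (-(q / p)) * b ^ q
        ≤ (lam ^ (-(q / p)) * (s ^ m) ^ (-(q / p))) * (K ^ q * (s ^ (m - 2)) ^ q) := by
          rw [mul_rpow hc0.le (by positivity), ← mul_rpow hK (by positivity)]
          gcongr ?_ * _ * ?_
          · exact rpow_le_rpow_of_nonpos hlam hc (neg_nonpos.2 (div_pos hq hpq.pos).le)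
          · exact rpow_le_rpow hb hbK hq.le
      _ = lam ^ (-(q / p)) * K ^ q * s ^ ((m : ℝ) - 2 * q) := by rw [← hexp]; ring
      _ ≤ lam ^ (-(q / p)) * K ^ q * 1 := by
          gcongr
          exact rpow_le_one hs.le hs1 (by linarith)
      _ = lam ^ (-(q / p)) * K ^ q := mul_one _
  calc a * b ≤ c * s ^ m * a ^ p / p + (c * s ^ m) ^ (-(q / p)) * b ^ q / q :=
        young_inequality_weighted hpq ha hb (by positivity)
    _ ≤ c * s ^ m * a ^ p / p + lam ^ (-(q / p)) * K ^ q / q := by gcongr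

lemma MeasureTheory.LocallyIntegrableOn.integrableOn_mul_of_hasCompactSupport {f g : ℝ → ℝ}
    {s : Set ℝ} (hs : IsClosed s) (hf : LocallyIntegrableOn f s) (hg : Continuous g)
    (hgc : HasCompactSupport g) : IntegrableOn (fun t => f t * g t) s :=
  ((locallyIntegrableOn_iff_locallyIntegrable_restrict hs).1
    hf).integrable_smul_right_of_hasCompactSupport hg hgc

lemma abs_mul_le_nonlinear_mul_testFunction_add {H lam p q K R : ℝ} {X : ℝ → ℝ} {m : ℕ}
    (hH : 0 ≤ H) (hlam : 0 < lam) (hpq : p.HolderConjugate q) (hm : 2 * q ≤ m) (hK : 0 ≤ K)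
    (hR : 0 < R)
    (hG : ∀ t, |deriv (deriv (testFunction m R)) t - 2 * H * deriv (testFunction m R) t| ≤
      K / R * cutoff (R⁻¹ * t) ^ (m - 2))
    {t : ℝ} (ht : 0 ≤ t) :
    |X t| * |deriv (deriv (testFunction m R)) t - 2 * H * deriv (testFunction m R) t| ≤
      lam * Real.exp ((p - 1) * H * t) * |X t| ^ p * testFunction m R t / p +
        (Icc 0 (2 * R)).indicator (fun _ => lam ^ (-(q / p)) * (K / R) ^ q / q) t := by
  have hrem : 0 ≤ lam ^ (-(q / p)) * (K / R) ^ q / q := by have := hpq.symm.pos; positivity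
  have hF : 0 ≤ lam * Real.exp ((p - 1) * H * t) * |X t| ^ p * testFunction m R t / p := by
    have := hpq.pos; have := testFunction_nonneg (m := m) (R := R) t; positivity
  by_cases ht2R : t ≤ 2 * R
  · rw [indicator_of_mem (show t ∈ Icc 0 (2 * R) from ⟨ht, ht2R⟩)]
    have hexp : 1 ≤ Real.exp ((p - 1) * H * t) :=
      one_le_exp (mul_nonneg (mul_nonneg hpq.sub_one_pos.le hH) ht)
    convert young_inequality_cutoff hpq hm (abs_nonneg (X t)) (abs_nonneg _) hlam
      (le_mul_of_one_le_right hlam.le hexp) (cutoff_nonneg _) (cutoff_le_one _)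
      (div_nonneg hK hR.le) ((hG t).trans_eq (by ring)) using 2
    rw [testFunction]
    ring
  · have hcut : cutoff (R⁻¹ * t) = 0 := by
      refine cutoff_eq_zero ?_
      rw [abs_of_nonneg (by positivity), le_inv_mul_iff₀ hR]
      linarith
    have hm2 := hpq.two_lt_of_two_mul_le hm
    have hG0 := hG t
    rw [hcut, zero_pow (by omega), mul_zero, abs_nonpos_iff] at hG0
    rw [hG0, abs_zero, mul_zero]
    exact add_nonneg hF (indicator_nonneg (fun _ _ => hrem) t)

structure IsGlobalWeakSolution (H lam p X₀ X₁ : ℝ) (X : ℝ → ℝ) : Prop where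
  locallyIntegrableOn : LocallyIntegrableOn X (Ici 0)
  locallyIntegrableOn_nonlinear :
    LocallyIntegrableOn (fun t => Real.exp ((p - 1) * H * t) * |X t| ^ p) (Ici 0)
  weak_eq : ∀ φ : ℝ → ℝ, ContDiff ℝ 2 φ → HasCompactSupport φ →
    -X₁ * φ 0 + X₀ * deriv φ 0 - 2 * H * X₀ * φ 0 +
      ∫ t in Ici (0 : ℝ),
        (X t * deriv (deriv φ) t - 2 * H * X t * deriv φ t +
          lam * Real.exp ((p - 1) * H * t) * |X t| ^ p * φ t) = 0

namespace IsGlobalWeakSolution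

variable {H lam p X₀ X₁ : ℝ} {X : ℝ → ℝ}

lemma integrableOn_mul (hX : IsGlobalWeakSolution H lam p X₀ X₁ X) {g : ℝ → ℝ}
    (hg : Continuous g) (hgc : HasCompactSupport g) :
    IntegrableOn (fun t => X t * g t) (Ici 0) :=
  hX.locallyIntegrableOn.integrableOn_mul_of_hasCompactSupport isClosed_Ici hg hgc

lemma integrableOn_nonlinear_mul (hX : IsGlobalWeakSolution H lam p X₀ X₁ X) {g : ℝ → ℝ}
    (hg : Continuous g) (hgc : HasCompactSupport g) :
    IntegrableOn (fun t => lam * Real.exp ((p - 1) * H * t) * |X t| ^ p * g t) (Ici 0) :=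
  IntegrableOn.congr_fun
    ((hX.locallyIntegrableOn_nonlinear.integrableOn_mul_of_hasCompactSupport isClosed_Ici hg
      hgc).const_mul lam) (fun t _ => by ring) measurableSet_Ici

lemma integral_nonlinear_mul_le (hX : IsGlobalWeakSolution H lam p X₀ X₁ X)
    (hdata : X₁ + 2 * H * X₀ ≤ 0) {φ : ℝ → ℝ} (hφ : ContDiff ℝ 2 φ) (hφc : HasCompactSupport φ)
    (hφ0 : φ 0 = 1) (hφ'0 : deriv φ 0 = 0) :
    ∫ t in Ici 0, lam * Real.exp ((p - 1) * H * t) * |X t| ^ p * φ t ≤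
      ∫ t in Ici 0, |X t| * |deriv (deriv φ) t - 2 * H * deriv φ t| := by
  have hG : Continuous (fun t => deriv (deriv φ) t - 2 * H * deriv φ t) :=
    ((hφ.iterate_deriv' 0 2).continuous).sub
      (continuous_const.mul (hφ.continuous_deriv (by norm_num)))
  have hGc : HasCompactSupport (fun t => deriv (deriv φ) t - 2 * H * deriv φ t) :=
    hφc.deriv.deriv.sub (hφc.deriv.mul_left (f := fun _ => 2 * H))
  have hXG := hX.integrableOn_mul hG hGc
  have hweak := hX.weak_eq φ hφ hφc
  rw [hφ0, hφ'0] at hweak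
  have hsplit : ∫ t in Ici 0, (X t * deriv (deriv φ) t - 2 * H * X t * deriv φ t +
        lam * Real.exp ((p - 1) * H * t) * |X t| ^ p * φ t) =
      (∫ t in Ici 0, X t * (deriv (deriv φ) t - 2 * H * deriv φ t)) +
        ∫ t in Ici 0, lam * Real.exp ((p - 1) * H * t) * |X t| ^ p * φ t := by
    rw [← integral_add hXG (hX.integrableOn_nonlinear_mul hφ.continuous hφc)]
    congr 1 with t
    ring
  have habs : -∫ t in Ici 0, X t * (deriv (deriv φ) t - 2 * H * deriv φ t) ≤
      ∫ t in Ici 0, |X t| * |deriv (deriv φ) t - 2 * H * deriv φ t| :=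
    (neg_le_abs _).trans (abs_integral_le_integral_abs.trans_eq (by simp only [abs_mul]))
  linarith

lemma integral_abs_mul_testFunction_le (hX : IsGlobalWeakSolution H lam p X₀ X₁ X) (hH : 0 ≤ H)
    (hlam : 0 < lam) {q : ℝ} (hpq : p.HolderConjugate q) {m : ℕ} (hm : 2 * q ≤ m) {K R : ℝ}
    (hK : 0 ≤ K) (hR : 0 < R)
    (hG : ∀ t, |deriv (deriv (testFunction m R)) t - 2 * H * deriv (testFunction m R) t| ≤
      K / R * cutoff (R⁻¹ * t) ^ (m - 2)) :
    ∫ t in Ici 0, |X t| *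
        |deriv (deriv (testFunction m R)) t - 2 * H * deriv (testFunction m R) t| ≤
      (∫ t in Ici 0, lam * Real.exp ((p - 1) * H * t) * |X t| ^ p * testFunction m R t) / p +
        lam ^ (-(q / p)) * (K / R) ^ q / q * (2 * R) := by
  have hm0 : m ≠ 0 := Nat.ne_zero_of_lt (hpq.two_lt_of_two_mul_le hm)
  have hF := hX.integrableOn_nonlinear_mul continuous_testFunction
    (hasCompactSupport_testFunction hm0 hR.ne')
  have hind : IntegrableOn ((Icc 0 (2 * R)).indicator fun _ => lam ^ (-(q / p)) * (K / R) ^ q / q)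
      (Ici 0) :=
    (integrableOn_const ((Measure.restrict_apply_le _ _).trans_lt measure_Icc_lt_top).ne
      ).integrable_indicator measurableSet_Icc
  calc _ ≤ ∫ t in Ici 0, (lam * Real.exp ((p - 1) * H * t) * |X t| ^ p * testFunction m R t / p +
        (Icc 0 (2 * R)).indicator (fun _ => lam ^ (-(q / p)) * (K / R) ^ q / q) t) :=
        integral_mono_of_nonneg (Eventually.of_forall fun t => by positivity)
          ((hF.div_const p).add hind)
          ((ae_restrict_iff' measurableSet_Ici).2 (Eventually.of_forall fun t ht =>
            abs_mul_le_nonlinear_mul_testFunction_add hH hlam hpq hm hK hR hG ht))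
    _ = _ := by
        rw [integral_add (hF.div_const p) hind, integral_div, integral_indicator_const _
          measurableSet_Icc, measureReal_restrict_apply measurableSet_Icc,
          inter_eq_left.2 Icc_subset_Ici_self, volume_real_Icc_of_le (by positivity), smul_eq_mul]
        ring

lemma exists_integral_nonlinear_mul_testFunction_le (hX : IsGlobalWeakSolution H lam p X₀ X₁ X)
    (hH : 0 ≤ H) (hlam : 0 < lam) (hdata : X₁ + 2 * H * X₀ ≤ 0) {q : ℝ}
    (hpq : p.HolderConjugate q) {m : ℕ} (hm : 2 * q ≤ m) :
    ∃ B, ∀ R, 1 ≤ R →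
      ∫ t in Ici 0, lam * Real.exp ((p - 1) * H * t) * |X t| ^ p * testFunction m R t ≤
        B * R ^ (1 - q) := by
  have hq := hpq.symm.pos
  have hm2 := hpq.two_lt_of_two_mul_le hm
  obtain ⟨K, hK, hG⟩ := exists_abs_deriv_deriv_sub_testFunction_le H hH hm2.le
  refine ⟨2 * lam ^ (-(q / p)) * K ^ q, fun R hR => ?_⟩
  have hR0 : 0 < R := one_pos.trans_le hR
  have hweak := hX.integral_nonlinear_mul_le hdata (contDiff_testFunction (m := m))
    (hasCompactSupport_testFunction (by omega) hR0.ne')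
    (testFunction_eq_one hR0 (by simpa using hR0.le)) (deriv_testFunction_zero hR0)
  have hyoung := hX.integral_abs_mul_testFunction_le hH hlam hpq hm hK hR0 (hG R hR)
  set I := ∫ t in Ici 0, lam * Real.exp ((p - 1) * H * t) * |X t| ^ p * testFunction m R t
  have hscale : lam ^ (-(q / p)) * (K / R) ^ q / q * (2 * R) =
      2 * lam ^ (-(q / p)) * K ^ q * R ^ (1 - q) / q := by
    rw [div_rpow hK hR0.le, rpow_sub hR0, rpow_one]
    field_simp
  have hsplit : I = I / p + I / q := by
    calc I = I * (p⁻¹ + q⁻¹) := by rw [hpq.inv_add_inv_eq_one, mul_one]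
      _ = I / p + I / q := by ring
  have : I / q ≤ 2 * lam ^ (-(q / p)) * K ^ q * R ^ (1 - q) / q := by linarith
  exact (div_le_div_iff_of_pos_right hq).1 this

lemma ae_eq_zero_restrict_Icc (hX : IsGlobalWeakSolution H lam p X₀ X₁ X) (hH : 0 ≤ H)
    (hlam : 0 < lam) (hp : 1 < p) (hdata : X₁ + 2 * H * X₀ ≤ 0) (S : ℝ) :
    ∀ᵐ t ∂volume.restrict (Icc 0 S), X t = 0 := by
  set q := p.conjExponent
  have hpq : p.HolderConjugate q := .conjExponent hp
  obtain ⟨B, hB⟩ := hX.exists_integral_nonlinear_mul_testFunction_le hH hlam hdata hpq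
    (Nat.le_ceil (2 * q))
  set m := ⌈2 * q⌉₊
  have hm0 : m ≠ 0 := Nat.ne_zero_of_lt (hpq.two_lt_of_two_mul_le (Nat.le_ceil (2 * q)))
  set F := fun t => lam * Real.exp ((p - 1) * H * t) * |X t| ^ p
  have hF0 : ∀ t, 0 ≤ F t := fun t => by positivity
  have hFint : IntegrableOn F (Icc 0 S) :=
    IntegrableOn.congr_fun ((hX.locallyIntegrableOn_nonlinear.integrableOn_compact_subset
      Icc_subset_Ici_self isCompact_Icc).const_mul lam) (fun t _ => by simp only [F, mul_assoc])
      measurableSet_Icc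
  have hle : ∀ R, max S 1 ≤ R → ∫ t in Icc 0 S, F t ≤ B * R ^ (1 - q) := fun R hR => by
    have hR0 : 0 < R := one_pos.trans_le ((le_max_right _ _).trans hR)
    calc ∫ t in Icc 0 S, F t = ∫ t in Icc 0 S, F t * testFunction m R t :=
          setIntegral_congr_fun measurableSet_Icc fun t ht => by
            rw [testFunction_eq_one hR0 ((abs_of_nonneg ht.1).trans_le
              (ht.2.trans ((le_max_left _ _).trans hR))), mul_one]
      _ ≤ ∫ t in Ici 0, F t * testFunction m R t :=
          setIntegral_mono_set (hX.integrableOn_nonlinear_mul continuous_testFunction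
            (hasCompactSupport_testFunction hm0 hR0.ne'))
            (Eventually.of_forall fun t => mul_nonneg (hF0 t) (testFunction_nonneg t))
            Icc_subset_Ici_self.eventuallyLE
      _ ≤ B * R ^ (1 - q) := hB R ((le_max_right _ _).trans hR)
  have hlim : Tendsto (fun R : ℝ => B * R ^ (1 - q)) atTop (𝓝 0) := by
    simpa using (tendsto_rpow_neg_atTop (by linarith [hpq.symm.lt] : 0 < q - 1)).const_mul B
  have hzero : ∫ t in Icc 0 S, F t = 0 :=
    le_antisymm (ge_of_tendsto hlim (eventually_atTop.2 ⟨_, hle⟩))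
      (setIntegral_nonneg measurableSet_Icc fun t _ => hF0 t)
  filter_upwards [(integral_eq_zero_iff_of_nonneg (fun t => hF0 t) hFint).1 hzero] with t ht
  simpa [F, hlam.ne', (exp_pos _).ne', rpow_eq_zero_iff_of_nonneg, hpq.pos.ne'] using ht

end IsGlobalWeakSolution

/-- Nonexistence of nontrivial global weak solutions of the damped equation
`D_t²X + 2H·D_tX + λe^{(p-1)Ht}|X|^p = 0` on `[0,∞)`: if `X₁ + 2HX₀ ≤ 0`, any global weak
solution vanishes a.e. -/
theorem stmt_12 (H lam p : ℝ) (hH : 0 ≤ H) (hlam : 0 < lam) (hp : 1 < p)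
    (X₀ X₁ : ℝ) (X : ℝ → ℝ)
    (hloc : LocallyIntegrableOn X (Ici (0 : ℝ)))
    (hlocp : LocallyIntegrableOn (fun t => Real.exp ((p - 1) * H * t) * |X t| ^ p) (Ici (0 : ℝ)))
    (hweak : ∀ φ : ℝ → ℝ, ContDiff ℝ 2 φ → HasCompactSupport φ →
      -X₁ * φ 0 + X₀ * deriv φ 0 - 2 * H * X₀ * φ 0 +
        ∫ t in Ici (0 : ℝ),
          (X t * deriv (deriv φ) t - 2 * H * X t * deriv φ t +
            lam * Real.exp ((p - 1) * H * t) * |X t| ^ p * φ t) = 0)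
    (hdata : X₁ + 2 * H * X₀ ≤ 0) :
    ∀ᵐ t ∂(volume.restrict (Ici (0 : ℝ))), X t = 0 := by
  have hX : IsGlobalWeakSolution H lam p X₀ X₁ X := ⟨hloc, hlocp, hweak⟩
  have hcover : Ici (0 : ℝ) = ⋃ n : ℕ, Icc 0 (n : ℝ) := by
    ext t
    simp only [mem_Ici, mem_iUnion, mem_Icc]
    exact ⟨fun ht => (exists_nat_ge t).imp fun _ hn => ⟨ht, hn⟩, fun ⟨_, ht, _⟩ => ht⟩
  rw [hcover, ae_restrict_iUnion_iff]
  exact fun n => hX.ae_eq_zero_restrict_Icc hH hlam hp hdata n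
end

section
/- Let T > 0 and let ã : [0,T) → ℝ be continuously differentiable with ã(t) > 0 and (D_tã)(t) ≥ 0 for all t ∈ [0,T). Let ρ₀, ρ₁ : [0,T) → ℝ be the solutions of D_t²ρ(t) + ã(t)ρ(t) = 0 on [0,T) with ρ₀(0) = 1, (D_tρ₀)(0) = 0 and ρ₁(0) = 0, (D_tρ₁)(0) = 1. Then for all t ∈ [0,T): |ρ₀(t)| ≤ 1, (D_tρ₀)(t)² ≤ ã(t), ã(0)·ρ₁(t)² ≤ 1, and ã(0)·(D_tρ₁)(t)² ≤ ã(t). -/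
open Set

lemma energy_le (T : ℝ) (hT : 0 < T) (atil atil' : ℝ → ℝ)
    (hatil : ∀ t ∈ Ico (0 : ℝ) T, HasDerivWithinAt atil (atil' t) (Ico (0 : ℝ) T) t)
    (hpos : ∀ t ∈ Ico (0 : ℝ) T, 0 < atil t)
    (hinc : ∀ t ∈ Ico (0 : ℝ) T, 0 ≤ atil' t)
    (ρ ρ' : ℝ → ℝ)
    (hρ : ∀ t ∈ Ico (0 : ℝ) T, HasDerivWithinAt ρ (ρ' t) (Ico (0 : ℝ) T) t)
    (hρ' : ∀ t ∈ Ico (0 : ℝ) T, HasDerivWithinAt ρ' (-(atil t * ρ t)) (Ico (0 : ℝ) T) t) :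
    ∀ t ∈ Ico (0 : ℝ) T,
      ρ t ^ 2 + ρ' t ^ 2 / atil t ≤ ρ 0 ^ 2 + ρ' 0 ^ 2 / atil 0 := by
  set E : ℝ → ℝ := fun t => ρ t ^ 2 + ρ' t ^ 2 / atil t with hE
  have hconv : Convex ℝ (Ico (0 : ℝ) T) := convex_Ico 0 T
  have hcont : ContinuousOn E (Ico (0 : ℝ) T) := by
    apply ContinuousOn.add
    · exact ContinuousOn.pow (fun t ht => (hρ t ht).continuousWithinAt) 2
    · exact ContinuousOn.div (ContinuousOn.pow (fun t ht => (hρ' t ht).continuousWithinAt) 2)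
        (fun t ht => (hatil t ht).continuousWithinAt)
        (fun t ht => (hpos t ht).ne')
  have hint : interior (Ico (0 : ℝ) T) = Ioo 0 T := interior_Ico
  have key : ∀ x ∈ interior (Ico (0 : ℝ) T), HasDerivAt E
      (-(ρ' x ^ 2 * atil' x) / atil x ^ 2) x := by
    intro x hx
    rw [hint] at hx
    have hx' : x ∈ Ico (0 : ℝ) T := Ioo_subset_Ico_self hx
    have hnhds : Ico (0 : ℝ) T ∈ nhds x := Ico_mem_nhds hx.1 hx.2
    have h1 : HasDerivAt ρ (ρ' x) x := (hρ x hx').hasDerivAt hnhds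
    have h2 : HasDerivAt ρ' (-(atil x * ρ x)) x := (hρ' x hx').hasDerivAt hnhds
    have h3 : HasDerivAt atil (atil' x) x := (hatil x hx').hasDerivAt hnhds
    have hne : atil x ≠ 0 := (hpos x hx').ne'
    have hD : HasDerivAt E
        ((2 : ℕ) * ρ x ^ 1 * ρ' x +
          ((2 : ℕ) * ρ' x ^ 1 * (-(atil x * ρ x)) * atil x - ρ' x ^ 2 * atil' x) / atil x ^ 2)
        x := (h1.pow 2).add ((h2.pow 2).div h3 hne)
    convert hD using 1
    field_simp
    ring
  have hanti : AntitoneOn E (Ico (0 : ℝ) T) := by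
    apply AntitoneOn.mono (s := Ico (0:ℝ) T)
      (antitoneOn_of_deriv_nonpos hconv hcont ?_ ?_) le_rfl
    · exact fun x hx => (key x hx).differentiableAt.differentiableWithinAt
    · intro x hx
      rw [(key x hx).deriv]
      apply div_nonpos_of_nonpos_of_nonneg
      · have hx' : x ∈ Ico (0 : ℝ) T := by rw [hint] at hx; exact Ioo_subset_Ico_self hx
        have := hinc x hx'
        nlinarith [sq_nonneg (ρ' x)]
      · positivity
  intro t ht
  exact hanti (left_mem_Ico.2 hT) ht ht.1

/-- Energy bounds for the fundamental system of `D_t²ρ + ã(t)ρ = 0` when `ã > 0` is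
nondecreasing: `|ρ₀(t)| ≤ 1`, `(D_tρ₀(t))² ≤ ã(t)`, `ã(0)ρ₁(t)² ≤ 1`,
`ã(0)(D_tρ₁(t))² ≤ ã(t)`. -/
theorem stmt_15 (T : ℝ) (hT : 0 < T) (atil atil' : ℝ → ℝ)
    (hatil : ∀ t ∈ Ico (0 : ℝ) T, HasDerivWithinAt atil (atil' t) (Ico (0 : ℝ) T) t)
    (hatilc : ContinuousOn atil' (Ico (0 : ℝ) T))
    (hpos : ∀ t ∈ Ico (0 : ℝ) T, 0 < atil t)
    (hinc : ∀ t ∈ Ico (0 : ℝ) T, 0 ≤ atil' t)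
    (ρ₀ ρ₀' ρ₁ ρ₁' : ℝ → ℝ)
    (hρ₀ : ∀ t ∈ Ico (0 : ℝ) T, HasDerivWithinAt ρ₀ (ρ₀' t) (Ico (0 : ℝ) T) t)
    (hρ₀' : ∀ t ∈ Ico (0 : ℝ) T, HasDerivWithinAt ρ₀' (-(atil t * ρ₀ t)) (Ico (0 : ℝ) T) t)
    (hρ₁ : ∀ t ∈ Ico (0 : ℝ) T, HasDerivWithinAt ρ₁ (ρ₁' t) (Ico (0 : ℝ) T) t)
    (hρ₁' : ∀ t ∈ Ico (0 : ℝ) T, HasDerivWithinAt ρ₁' (-(atil t * ρ₁ t)) (Ico (0 : ℝ) T) t)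
    (h₀0 : ρ₀ 0 = 1) (h₀'0 : ρ₀' 0 = 0) (h₁0 : ρ₁ 0 = 0) (h₁'0 : ρ₁' 0 = 1) :
    ∀ t ∈ Ico (0 : ℝ) T,
      |ρ₀ t| ≤ 1 ∧ ρ₀' t ^ 2 ≤ atil t ∧
      atil 0 * ρ₁ t ^ 2 ≤ 1 ∧ atil 0 * ρ₁' t ^ 2 ≤ atil t := by
  intro t ht
  have h0mem : (0 : ℝ) ∈ Ico (0 : ℝ) T := left_mem_Ico.2 hT
  have ha0 : 0 < atil 0 := hpos 0 h0mem
  have hat : 0 < atil t := hpos t ht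
  have E0 := energy_le T hT atil atil' hatil hpos hinc ρ₀ ρ₀' hρ₀ hρ₀' t ht
  have E1 := energy_le T hT atil atil' hatil hpos hinc ρ₁ ρ₁' hρ₁ hρ₁' t ht
  rw [h₀0, h₀'0] at E0
  rw [h₁0, h₁'0] at E1
  norm_num at E0 E1
  have hq0 : 0 ≤ ρ₀' t ^ 2 / atil t := by positivity
  have hq1 : 0 ≤ ρ₁' t ^ 2 / atil t := by positivity
  refine ⟨?_, ?_, ?_, ?_⟩
  · rw [abs_le]
    constructor <;> nlinarith [sq_nonneg (ρ₀ t)]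
  · exact (div_le_one hat).1 (by linarith [sq_nonneg (ρ₀ t)])
  · have h : ρ₁ t ^ 2 ≤ (atil 0)⁻¹ := by linarith
    calc atil 0 * ρ₁ t ^ 2 ≤ atil 0 * (atil 0)⁻¹ := mul_le_mul_of_nonneg_left h ha0.le
      _ = 1 := mul_inv_cancel₀ ha0.ne'
  · have h : ρ₁' t ^ 2 / atil t ≤ (atil 0)⁻¹ := by linarith [sq_nonneg (ρ₁ t)]
    have h2 : ρ₁' t ^ 2 ≤ (atil 0)⁻¹ * atil t := (div_le_iff₀ hat).1 h
    calc atil 0 * ρ₁' t ^ 2 ≤ atil 0 * ((atil 0)⁻¹ * atil t) :=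
          mul_le_mul_of_nonneg_left h2 ha0.le
      _ = atil t := by rw [← mul_assoc, mul_inv_cancel₀ ha0.ne', one_mul]
end

section
/- Let n ≥ 1, T > 0, λ ∈ ℝ, 1 < p < ∞, and let A : [0,T) → ℝ be continuously differentiable with A(t) > 0 for all t ∈ [0,T). Let Y : [0,T) → ℝⁿ be a twice continuously differentiable solution of D_t²Y(t) + A(t)Y(t) + λ|Y(t)|^{p−1}Y(t) = 0 on [0,T). Define e⁰(t) := (1/2)A(t)^{−1}|D_tY(t)|² + (1/2)|Y(t)|² + (λ/(p+1))A(t)^{−1}|Y(t)|^{p+1} and e¹(t) := (1/2)A(t)^{−2}(D_tA)(t)|D_tY(t)|² + (λ/(p+1))A(t)^{−2}(D_tA)(t)|Y(t)|^{p+1}. Then the energy identity e⁰(t) + ∫₀ᵗ e¹(s) ds = e⁰(0) holds for all t ∈ [0,T). -/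
open Set intervalIntegral
open scoped RealInnerProductSpace

/-! Pairing the equation with `A⁻¹ D_tY` shows that the energy `e⁰` has derivative `-e¹`: the
terms `⟪D_tY, Y⟫` and `λ A⁻¹ |Y|^{p-1} ⟪D_tY, Y⟫` cancel between the kinetic and the potential
parts, and only the derivatives of the weights `A⁻¹` survive. The identity is then the
fundamental theorem of calculus on `[0, t]`. -/

theorem HasDerivWithinAt.norm_rpow {E : Type*} [NormedAddCommGroup E] [InnerProductSpace ℝ E]
    {f : ℝ → E} {f' : E} {s : Set ℝ} {x q : ℝ} (hq : 1 < q) (hf : HasDerivWithinAt f f' s x) :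
    HasDerivWithinAt (fun t => ‖f t‖ ^ q) (q * ‖f x‖ ^ (q - 2) * ⟪f x, f'⟫) s x :=
  ((hasFDerivAt_norm_rpow (f x) hq).comp_hasDerivWithinAt x hf).congr_deriv (by simp)

theorem integral_eq_sub_of_hasDerivWithinAt_Ico {E : Type*} [NormedAddCommGroup E]
    [NormedSpace ℝ E] [CompleteSpace E] {f f' : ℝ → E} {a b t : ℝ}
    (hf : ∀ x ∈ Ico a b, HasDerivWithinAt f (f' x) (Ico a b) x) (hf' : ContinuousOn f' (Ico a b))
    (ht : t ∈ Ico a b) : ∫ x in a..t, f' x = f t - f a := by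
  have hsub : Icc a t ⊆ Ico a b := Icc_subset_Ico_right ht.2
  refine integral_eq_sub_of_hasDerivAt_of_le ht.1
    (fun x hx => (hf x (hsub hx)).continuousWithinAt.mono hsub) (fun x hx => ?_)
    ((hf'.mono hsub).intervalIntegrable_of_Icc ht.1)
  exact (hf x (Ioo_subset_Icc_self hx |> hsub)).hasDerivAt (Ico_mem_nhds hx.1 (hx.2.trans ht.2))

section Energy

variable {E : Type*} [NormedAddCommGroup E]

/-- The energy `e⁰`, with `Y'` standing for `D_tY`. -/
noncomputable def energy (A : ℝ → ℝ) (lam p : ℝ) (Y Y' : ℝ → E) (t : ℝ) : ℝ :=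
  (1 / 2) * (A t)⁻¹ * ‖Y' t‖ ^ 2 + (1 / 2) * ‖Y t‖ ^ 2 +
    (lam / (p + 1)) * (A t)⁻¹ * ‖Y t‖ ^ (p + 1)

/-- The integrand `e¹` of the energy identity, with `A'` standing for `D_tA`. -/
noncomputable def energyFlux (A A' : ℝ → ℝ) (lam p : ℝ) (Y Y' : ℝ → E) (t : ℝ) : ℝ :=
  (1 / 2) * (A t)⁻¹ ^ 2 * A' t * ‖Y' t‖ ^ 2 +
    (lam / (p + 1)) * (A t)⁻¹ ^ 2 * A' t * ‖Y t‖ ^ (p + 1)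

variable {A A' : ℝ → ℝ} {lam p : ℝ} {Y Y' : ℝ → E} {s : Set ℝ}

theorem continuousOn_energyFlux (hp : 0 ≤ p + 1) (hA : ContinuousOn A s)
    (hA0 : ∀ t ∈ s, A t ≠ 0) (hA' : ContinuousOn A' s) (hY : ContinuousOn Y s)
    (hY' : ContinuousOn Y' s) : ContinuousOn (energyFlux A A' lam p Y Y') s := by
  have hweight (c : ℝ) : ContinuousOn (fun t => c * (A t)⁻¹ ^ 2 * A' t) s :=
    (continuousOn_const.mul ((hA.inv₀ hA0).pow 2)).mul hA'
  have hpot : ContinuousOn (fun t => ‖Y t‖ ^ (p + 1)) s := hY.norm.rpow_const fun _ _ => .inr hp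
  exact ((hweight _).mul (hY'.norm.pow 2)).add ((hweight _).mul hpot)

theorem hasDerivWithinAt_energy [InnerProductSpace ℝ E] {t : ℝ} (hp : 0 < p)
    (hA : HasDerivWithinAt A (A' t) s t) (hA0 : A t ≠ 0) (hY : HasDerivWithinAt Y (Y' t) s t)
    (hY' : HasDerivWithinAt Y' (-(A t • Y t) - (lam * ‖Y t‖ ^ (p - 1)) • Y t) s t) :
    HasDerivWithinAt (energy A lam p Y Y') (-energyFlux A A' lam p Y Y' t) s t := by
  have hAinv := hA.inv hA0
  have hkin := ((hAinv.mul hY'.norm_sq).const_mul (1 / 2)).add (hY.norm_sq.const_mul (1 / 2))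
  have hpot := (hAinv.mul (hY.norm_rpow (q := p + 1) (by linarith))).const_mul (lam / (p + 1))
  have henergy : energy A lam p Y Y' = (fun u => 1 / 2 * (A⁻¹ * fun x => ‖Y' x‖ ^ 2) u +
      1 / 2 * ‖Y u‖ ^ 2 + lam / (p + 1) * (A⁻¹ * fun x => ‖Y x‖ ^ (p + 1)) u) := by
    funext u
    simp only [energy, Pi.mul_apply, Pi.inv_apply]
    ring
  rw [henergy]
  refine (hkin.add hpot).congr_deriv ?_
  have hp1 : p + 1 ≠ 0 := by linarith
  simp only [energyFlux, Pi.inv_apply, show p + 1 - 2 = p - 1 by ring, inner_sub_right,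
    inner_neg_right, real_inner_smul_right, real_inner_comm (Y t) (Y' t)]
  field_simp
  ring

end Energy

theorem stmt_17_general (n : ℕ) (T lam p : ℝ) (hp : 1 < p)
    (A A' : ℝ → ℝ)
    (hA : ∀ t ∈ Ico (0 : ℝ) T, HasDerivWithinAt A (A' t) (Ico (0 : ℝ) T) t)
    (hAc : ContinuousOn A' (Ico (0 : ℝ) T))
    (hApos : ∀ t ∈ Ico (0 : ℝ) T, 0 < A t)
    (Y Y' : ℝ → EuclideanSpace ℝ (Fin n))
    (hY1 : ∀ t ∈ Ico (0 : ℝ) T, HasDerivWithinAt Y (Y' t) (Ico (0 : ℝ) T) t)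
    (hY2 : ∀ t ∈ Ico (0 : ℝ) T, HasDerivWithinAt Y'
      (-(A t • Y t) - (lam * ‖Y t‖ ^ (p - 1)) • Y t) (Ico (0 : ℝ) T) t) :
    ∀ t ∈ Ico (0 : ℝ) T,
      ((1 / 2) * (A t)⁻¹ * ‖Y' t‖ ^ 2 + (1 / 2) * ‖Y t‖ ^ 2 +
          (lam / (p + 1)) * (A t)⁻¹ * ‖Y t‖ ^ (p + 1)) +
        (∫ s in (0 : ℝ)..t,
          ((1 / 2) * (A s)⁻¹ ^ 2 * A' s * ‖Y' s‖ ^ 2 +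
            (lam / (p + 1)) * (A s)⁻¹ ^ 2 * A' s * ‖Y s‖ ^ (p + 1))) =
      (1 / 2) * (A 0)⁻¹ * ‖Y' 0‖ ^ 2 + (1 / 2) * ‖Y 0‖ ^ 2 +
        (lam / (p + 1)) * (A 0)⁻¹ * ‖Y 0‖ ^ (p + 1) := by
  intro t ht
  have hA0 : ∀ s ∈ Ico (0 : ℝ) T, A s ≠ 0 := fun s hs => (hApos s hs).ne'
  have hflux : ContinuousOn (energyFlux A A' lam p Y Y') (Ico 0 T) :=
    continuousOn_energyFlux (by linarith) (fun s hs => (hA s hs).continuousWithinAt) hA0 hAc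
      (fun s hs => (hY1 s hs).continuousWithinAt) (fun s hs => (hY2 s hs).continuousWithinAt)
  have hftc := integral_eq_sub_of_hasDerivWithinAt_Ico
    (fun s hs => hasDerivWithinAt_energy (by linarith) (hA s hs) (hA0 s hs) (hY1 s hs) (hY2 s hs))
    hflux.neg ht
  rw [integral_neg] at hftc
  change energy A lam p Y Y' t + ∫ s in (0 : ℝ)..t, energyFlux A A' lam p Y Y' s =
    energy A lam p Y Y' 0
  linarith

/-- Energy identity for `D_t²Y + A(t)Y + λ|Y|^{p-1}Y = 0` with `A > 0`, where
`e⁰ = (1/2)A⁻¹|D_tY|² + (1/2)|Y|² + (λ/(p+1))A⁻¹|Y|^{p+1}` and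
`e¹ = (1/2)A⁻²(D_tA)|D_tY|² + (λ/(p+1))A⁻²(D_tA)|Y|^{p+1}`:
`e⁰(t) + ∫₀ᵗ e¹(s) ds = e⁰(0)`. -/
theorem stmt_17 (n : ℕ) (hn : 1 ≤ n) (T lam p : ℝ) (hT : 0 < T) (hp : 1 < p)
    (A A' : ℝ → ℝ)
    (hA : ∀ t ∈ Ico (0 : ℝ) T, HasDerivWithinAt A (A' t) (Ico (0 : ℝ) T) t)
    (hAc : ContinuousOn A' (Ico (0 : ℝ) T))
    (hApos : ∀ t ∈ Ico (0 : ℝ) T, 0 < A t)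
    (Y Y' : ℝ → EuclideanSpace ℝ (Fin n))
    (hY1 : ∀ t ∈ Ico (0 : ℝ) T, HasDerivWithinAt Y (Y' t) (Ico (0 : ℝ) T) t)
    (hY2 : ∀ t ∈ Ico (0 : ℝ) T, HasDerivWithinAt Y'
      (-(A t • Y t) - (lam * ‖Y t‖ ^ (p - 1)) • Y t) (Ico (0 : ℝ) T) t) :
    ∀ t ∈ Ico (0 : ℝ) T,
      ((1 / 2) * (A t)⁻¹ * ‖Y' t‖ ^ 2 + (1 / 2) * ‖Y t‖ ^ 2 +
          (lam / (p + 1)) * (A t)⁻¹ * ‖Y t‖ ^ (p + 1)) +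
        (∫ s in (0 : ℝ)..t,
          ((1 / 2) * (A s)⁻¹ ^ 2 * A' s * ‖Y' s‖ ^ 2 +
            (lam / (p + 1)) * (A s)⁻¹ ^ 2 * A' s * ‖Y s‖ ^ (p + 1))) =
      (1 / 2) * (A 0)⁻¹ * ‖Y' 0‖ ^ 2 + (1 / 2) * ‖Y 0‖ ^ 2 +
        (lam / (p + 1)) * (A 0)⁻¹ * ‖Y 0‖ ^ (p + 1) :=
  stmt_17_general n T lam p hp A A' hA hAc hApos Y Y' hY1 hY2
end
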